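/- arXiv:math/0703883 — 2 statements merged into one kernel-verified Lean document; each statement's English description precedes it below -/
import Mathlib

section
/- Let n ≥ 1, s < 0 and 1 ≤ p, q ≤ ∞. There exist constants c, C > 0, depending only on n, s, q and the choice of χ, such that for every Schwartz function f on ℝⁿ, c (Σ_{j∈ℤ} (2^{sj} ‖Δ_j f‖_{L^p})^q)^{1/q} ≤ (Σ_{j∈ℤ} (2^{sj} ‖S_j f‖_{L^p})^q)^{1/q} ≤ C (Σ_{j∈ℤ} (2^{sj} ‖Δ_j f‖_{L^p})^q)^{1/q}, with the usual supremum modification when q = ∞, both inequalities being understood in [0,∞]. -/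
/-!
Since `φ̂(ξ/2^j) = χ(ξ/2^(j+1)) - χ(ξ/2^j)`, linearity of `𝓕⁻` on `L¹` gives
`Δ_j f = S_(j+1) f - S_j f`, hence `2^(sj)‖Δ_j f‖_p ≤ 2^(-s) 2^(s(j+1))‖S_(j+1) f‖_p + 2^(sj)‖S_j f‖_p`
and the lower bound with `c = (2^(-s) + 1)⁻¹` by the triangle inequality in `ℓ^q`.

Conversely, for `ξ ≠ 0` the multiplier `χ(ξ/2^j)` vanishes once `j` is negative enough, so by
dominated convergence `S_j f → 0` pointwise as `j → -∞` (this needs `{0}` to be null, i.e. `n ≥ 1`).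
Telescoping gives `S_j f = ∑_(i ≥ 0) Δ_(j-1-i) f`, and Fatou's lemma `‖S_j f‖_p ≤ ∑_i ‖Δ_(j-1-i) f‖_p`.
After weighting by `2^(sj)` this is a convolution with the kernel `2^((i+1)s)`, summable because
`s < 0`, and Minkowski's inequality in `ℓ^q` gives the upper bound with `C = ∑_i 2^((i+1)s)`.
-/
open MeasureTheory Real Complex Filter Function
open scoped ENNReal FourierTransform SchwartzMap

noncomputable section

/-- The properties of the radial smooth cutoff `χ` used to build the
Littlewood–Paley decomposition: smooth, compactly supported, radial,
`0 ≤ χ ≤ 1`, `χ = 1` on `{‖ξ‖ ≤ 3/4}` and `χ = 0` on `{‖ξ‖ > 4/3}`. -/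
def IsLPCutoff {n : ℕ} (χ : EuclideanSpace ℝ (Fin n) → ℝ) : Prop :=
  ContDiff ℝ ((⊤ : ℕ∞) : WithTop ℕ∞) χ ∧ HasCompactSupport χ ∧
    (∀ ξ η, ‖ξ‖ = ‖η‖ → χ ξ = χ η) ∧ (∀ ξ, 0 ≤ χ ξ) ∧ (∀ ξ, χ ξ ≤ 1) ∧
    (∀ ξ, ‖ξ‖ ≤ 3 / 4 → χ ξ = 1) ∧ (∀ ξ, 4 / 3 < ‖ξ‖ → χ ξ = 0)

/-- The low-frequency Littlewood–Paley projection `S_j f = 𝓕⁻¹(χ(·/2^j) 𝓕 f)`. -/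
def Sproj {n : ℕ} (χ : EuclideanSpace ℝ (Fin n) → ℝ) (j : ℤ)
    (f : EuclideanSpace ℝ (Fin n) → ℂ) : EuclideanSpace ℝ (Fin n) → ℂ :=
  𝓕⁻ fun ξ => ((χ ((2 : ℝ) ^ (-j) • ξ) : ℝ) : ℂ) * 𝓕 f ξ

/-- The Littlewood–Paley block `Δ_j f = 𝓕⁻¹(φ̂(·/2^j) 𝓕 f)`, where
`φ̂(ξ) = χ(ξ/2) - χ(ξ)`, i.e. `φ̂(ξ/2^j) = χ(ξ/2^(j+1)) - χ(ξ/2^j)`. -/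
def Dproj {n : ℕ} (χ : EuclideanSpace ℝ (Fin n) → ℝ) (j : ℤ)
    (f : EuclideanSpace ℝ (Fin n) → ℂ) : EuclideanSpace ℝ (Fin n) → ℂ :=
  𝓕⁻ fun ξ => ((χ ((2 : ℝ) ^ (-(j + 1)) • ξ) - χ ((2 : ℝ) ^ (-j) • ξ) : ℝ) : ℂ) * 𝓕 f ξ

/-- The `ℓ^q(ℤ)` norm of a sequence of extended nonnegative reals, with the usual
supremum modification for `q = ∞`. -/
def lqNorm (q : ℝ≥0∞) (a : ℤ → ℝ≥0∞) : ℝ≥0∞ :=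
  if q = ∞ then ⨆ j, a j else (∑' j, a j ^ q.toReal) ^ (1 / q.toReal)

/-- The homogeneous Besov norm `‖f‖_{Ḃ^s_{p,q}}`, valued in `[0,∞]`. -/
def besovNorm {n : ℕ} (χ : EuclideanSpace ℝ (Fin n) → ℝ) (s : ℝ) (p q : ℝ≥0∞)
    (f : EuclideanSpace ℝ (Fin n) → ℂ) : ℝ≥0∞ :=
  lqNorm q fun j => (2 : ℝ≥0∞) ^ ((j : ℝ) * s) * eLpNorm (Dproj χ j f) p volume

open scoped Topology RealInnerProductSpace

section lqNorm

variable {q : ℝ≥0∞}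

lemma lqNorm_mono {a b : ℤ → ℝ≥0∞} (h : a ≤ b) : lqNorm q a ≤ lqNorm q b := by
  unfold lqNorm
  split
  · exact iSup_mono h
  · gcongr with j
    exact h j

lemma lqNorm_comp_add_right (a : ℤ → ℝ≥0∞) (k : ℤ) :
    lqNorm q (fun j => a (j + k)) = lqNorm q a := by
  unfold lqNorm
  split
  · exact (Equiv.addRight k).iSup_comp (g := a)
  · congr 1
    exact (Equiv.addRight k).tsum_eq (fun j => a j ^ q.toReal)

lemma lqNorm_const_mul (hq : q ≠ 0) (r : ℝ≥0∞) (a : ℤ → ℝ≥0∞) :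
    lqNorm q (fun j => r * a j) = r * lqNorm q a := by
  unfold lqNorm
  split
  · exact (ENNReal.mul_iSup _ _).symm
  · next hq_top =>
    have ht : 0 < q.toReal := ENNReal.toReal_pos hq hq_top
    simp_rw [ENNReal.mul_rpow_of_nonneg _ _ ht.le, ENNReal.tsum_mul_left,
      ENNReal.mul_rpow_of_nonneg _ _ (one_div_nonneg.2 ht.le), ← ENNReal.rpow_mul,
      mul_one_div_cancel ht.ne', ENNReal.rpow_one]

lemma lqNorm_zero (hq : q ≠ 0) : lqNorm q (fun _ => 0) = 0 := by
  simpa using lqNorm_const_mul hq 0 0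

lemma lqNorm_add_le (hq : 1 ≤ q) (a b : ℤ → ℝ≥0∞) :
    lqNorm q (a + b) ≤ lqNorm q a + lqNorm q b := by
  unfold lqNorm
  split
  · exact iSup_le fun j => add_le_add (le_iSup a j) (le_iSup b j)
  · next hq_top =>
    simp_rw [← lintegral_count]
    exact ENNReal.lintegral_Lp_add_le (measurable_of_countable a).aemeasurable
      (measurable_of_countable b).aemeasurable
      (by simpa using ENNReal.toReal_mono hq_top hq)

lemma lqNorm_sum_le (hq : 1 ≤ q) {ι : Type*} (s : Finset ι) (c : ι → ℤ → ℝ≥0∞) :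
    lqNorm q (fun j => ∑ i ∈ s, c i j) ≤ ∑ i ∈ s, lqNorm q (c i) := by
  simpa only [Finset.sum_fn] using Finset.le_sum_of_subadditive (lqNorm q)
    (lqNorm_zero (one_pos.trans_le hq).ne').le (lqNorm_add_le hq) s c

lemma lqNorm_iSup_of_monotone (hq : q ≠ 0) {a : ℕ → ℤ → ℝ≥0∞} (ha : Monotone a) :
    lqNorm q (fun j => ⨆ M, a M j) = ⨆ M, lqNorm q (a M) := by
  unfold lqNorm
  split
  · exact iSup_comm
  · next hq_top =>
    have ht : 0 < q.toReal := ENNReal.toReal_pos hq hq_top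
    have hsum : ∑' j, (⨆ M, a M j) ^ q.toReal = ⨆ M, ∑' j, a M j ^ q.toReal := by
      have hrpow : ∀ j, (⨆ M, a M j) ^ q.toReal = ⨆ M, a M j ^ q.toReal :=
        fun j => (ENNReal.orderIsoRpow _ ht).map_iSup _
      simp_rw [hrpow, ← lintegral_count]
      exact lintegral_iSup (fun M => measurable_of_countable _)
        fun M M' h j => ENNReal.rpow_le_rpow (ha h j) ht.le
    rw [hsum]
    exact (ENNReal.orderIsoRpow _ (one_div_pos.2 ht)).map_iSup _

lemma lqNorm_tsum_le (hq : 1 ≤ q) (c : ℕ → ℤ → ℝ≥0∞) :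
    lqNorm q (fun j => ∑' i, c i j) ≤ ∑' i, lqNorm q (c i) := by
  have hmono : Monotone fun M j => ∑ i ∈ Finset.range M, c i j :=
    fun M M' h j => Finset.sum_le_sum_of_subset (Finset.range_subset_range.2 h)
  simp_rw [ENNReal.tsum_eq_iSup_nat]
  rw [lqNorm_iSup_of_monotone (one_pos.trans_le hq).ne' hmono]
  exact iSup_mono fun M => lqNorm_sum_le hq _ c

lemma lqNorm_le_mul_of_le_shift_add (hq : 1 ≤ q) {a b : ℤ → ℝ≥0∞} {r : ℝ≥0∞}
    (h : ∀ j, a j ≤ r * b (j + 1) + b j) : lqNorm q a ≤ (r + 1) * lqNorm q b :=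
  calc lqNorm q a ≤ lqNorm q ((fun j => r * b (j + 1)) + b) := lqNorm_mono h
    _ ≤ lqNorm q (fun j => r * b (j + 1)) + lqNorm q b := lqNorm_add_le hq _ _
    _ = (r + 1) * lqNorm q b := by
      rw [lqNorm_const_mul (one_pos.trans_le hq).ne', lqNorm_comp_add_right, add_one_mul]

lemma lqNorm_le_tsum_mul_of_le_tsum_shift (hq : 1 ≤ q) {a b : ℤ → ℝ≥0∞} (w : ℕ → ℝ≥0∞)
    (k : ℕ → ℤ) (h : ∀ j, b j ≤ ∑' i, w i * a (j - k i)) :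
    lqNorm q b ≤ (∑' i, w i) * lqNorm q a :=
  calc lqNorm q b ≤ lqNorm q (fun j => ∑' i, w i * a (j - k i)) := lqNorm_mono h
    _ ≤ ∑' i, lqNorm q (fun j => w i * a (j - k i)) := lqNorm_tsum_le hq _
    _ = (∑' i, w i) * lqNorm q a := by
      simp_rw [lqNorm_const_mul (one_pos.trans_le hq).ne', sub_eq_add_neg,
        lqNorm_comp_add_right, ENNReal.tsum_mul_right]

end lqNorm

lemma tendsto_two_zpow_neg_atBot_atTop : Tendsto (fun j : ℤ => (2 : ℝ) ^ (-j)) atBot atTop := by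
  refine tendsto_atTop.2 fun b => ?_
  obtain ⟨k, hk⟩ := pow_unbounded_of_one_lt b one_lt_two
  filter_upwards [eventually_le_atBot (-(k : ℤ))] with j hj
  calc b ≤ (2 : ℝ) ^ (k : ℤ) := by rw [zpow_natCast]; exact hk.le
    _ ≤ 2 ^ (-j) := zpow_le_zpow_right₀ one_le_two (by omega)

lemma HasCompactSupport.eventually_apply_smul_eq_zero {E F : Type*} [NormedAddCommGroup E]
    [NormedSpace ℝ E] [Zero F] {g : E → F} (hg : HasCompactSupport g) {ξ : E} (hξ : ξ ≠ 0) :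
    ∀ᶠ t : ℝ in atTop, g (t • ξ) = 0 := by
  obtain ⟨R, hR⟩ := hg.isCompact.isBounded.subset_closedBall 0
  filter_upwards [eventually_gt_atTop (R / ‖ξ‖), eventually_ge_atTop 0] with t ht ht0
  refine image_eq_zero_of_notMem_tsupport fun hmem => ?_
  have := mem_closedBall_zero_iff.1 (hR hmem)
  rw [norm_smul, Real.norm_of_nonneg ht0] at this
  rw [div_lt_iff₀ (norm_pos_iff.2 hξ)] at ht
  linarith

section Fourier

variable {V E : Type*} [NormedAddCommGroup V] [InnerProductSpace ℝ V] [FiniteDimensional ℝ V]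
  [MeasurableSpace V] [BorelSpace V] [NormedAddCommGroup E] [NormedSpace ℂ E]

lemma integrable_comp_smul_mul {χ : V → ℝ} (hχ : Continuous χ) (hχ_supp : HasCompactSupport χ)
    {g : V → ℂ} (hg : Integrable g) (t : ℝ) : Integrable (fun ξ => (χ (t • ξ) : ℂ) * g ξ) := by
  obtain ⟨C, hC⟩ := hχ.bounded_above_of_compact_support hχ_supp
  exact hg.bdd_mul (c := C) (by fun_prop) (ae_of_all _ fun ξ => by simpa using hC (t • ξ))

lemma fourierInv_sub_apply {g h : V → E} (hg : Integrable g) (hh : Integrable h) (x : V) :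
    𝓕⁻ (g - h) x = 𝓕⁻ g x - 𝓕⁻ h x := by
  simp only [Real.fourierInv_eq_fourier_neg, Real.fourier_eq, Pi.sub_apply, smul_sub]
  exact integral_sub ((Real.fourierIntegral_convergent_iff _).2 hg)
    ((Real.fourierIntegral_convergent_iff _).2 hh)

lemma continuous_fourierInv_of_integrable [CompleteSpace E] {g : V → E} (hg : Integrable g) :
    Continuous (𝓕⁻ g) := by
  rw [← Real.Lp.fourierTransformInv_toLp (memLp_one_iff_integrable.2 hg)]
  exact BoundedContinuousFunction.continuous _

lemma tendsto_fourierInv_of_dominated {ι : Type*} {l : Filter ι} [l.IsCountablyGenerated]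
    {F : ι → V → E} {G : V → E} (bound : V → ℝ)
    (hF_meas : ∀ᶠ i in l, AEStronglyMeasurable (F i)) (h_bound : ∀ᶠ i in l, ∀ᵐ ξ, ‖F i ξ‖ ≤ bound ξ)
    (bound_integrable : Integrable bound) (h_lim : ∀ᵐ ξ, Tendsto (fun i => F i ξ) l (𝓝 (G ξ)))
    (x : V) : Tendsto (fun i => 𝓕⁻ (F i) x) l (𝓝 (𝓕⁻ G x)) := by
  simp only [Real.fourierInv_eq]
  refine tendsto_integral_filter_of_dominated_convergence bound ?_ ?_ bound_integrable ?_
  · filter_upwards [hF_meas] with i hi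
    exact (by fun_prop : Continuous fun ξ : V => 𝐞 ⟪ξ, x⟫).aestronglyMeasurable.smul hi
  · filter_upwards [h_bound] with i hi
    filter_upwards [hi] with ξ hξ
    rwa [Circle.norm_smul]
  · filter_upwards [h_lim] with ξ hξ
    exact hξ.const_smul _

end Fourier

lemma eLpNorm_le_tsum_of_tendsto_sum_range {α E : Type*} [MeasurableSpace α] {μ : Measure α}
    [NormedAddCommGroup E] {p : ℝ≥0∞} (hp : 1 ≤ p) {f : ℕ → α → E} {g : α → E}
    (hf : ∀ i, AEStronglyMeasurable (f i) μ)
    (hg : ∀ᵐ x ∂μ, Tendsto (fun M => ∑ i ∈ Finset.range M, f i x) atTop (𝓝 (g x))) :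
    eLpNorm g p μ ≤ ∑' i, eLpNorm (f i) p μ := by
  simp only [← Finset.sum_apply] at hg
  exact Lp.eLpNorm_le_of_ae_tendsto
    (Eventually.of_forall fun M => (eLpNorm_sum_le (fun i _ => hf i) hp).trans
      (ENNReal.sum_le_tsum _))
    (fun M => Finset.aestronglyMeasurable_sum _ fun i _ => hf i) hg

lemma tsum_two_rpow_succ_mul_lt_top {s : ℝ} (hs : s < 0) :
    ∑' i : ℕ, (2 : ℝ≥0∞) ^ (((i : ℝ) + 1) * s) < ∞ := by
  have hr : (2 : ℝ≥0∞) ^ s < 1 := ENNReal.rpow_lt_one_of_one_lt_of_neg (by norm_num) hs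
  have h_geom : ∀ i : ℕ, (2 : ℝ≥0∞) ^ (((i : ℝ) + 1) * s) = (2 ^ s) ^ (i + 1) := fun i => by
    rw [mul_comm, ENNReal.rpow_mul, ← ENNReal.rpow_natCast]
    push_cast
    rfl
  simp_rw [h_geom, ENNReal.tsum_geometric_add_one]
  exact ENNReal.mul_lt_top (hr.trans ENNReal.one_lt_top)
    (ENNReal.inv_lt_top.2 (tsub_pos_of_lt hr))

section LittlewoodPaley

variable {n : ℕ} {χ : EuclideanSpace ℝ (Fin n) → ℝ} {f : EuclideanSpace ℝ (Fin n) → ℂ}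

lemma Dproj_eq_sub (hχ : Continuous χ) (hχ_supp : HasCompactSupport χ) (hf : Integrable (𝓕 f))
    (j : ℤ) : Dproj χ j f = Sproj χ (j + 1) f - Sproj χ j f := by
  ext x
  rw [Pi.sub_apply, Sproj, Sproj, ← fourierInv_sub_apply (integrable_comp_smul_mul hχ hχ_supp hf _)
    (integrable_comp_smul_mul hχ hχ_supp hf _), Dproj]
  refine congrArg (fun g : EuclideanSpace ℝ (Fin n) → ℂ => 𝓕⁻ g x) (funext fun ξ => ?_)
  simp only [Pi.sub_apply]
  push_cast
  ring

lemma continuous_Sproj (hχ : Continuous χ) (hχ_supp : HasCompactSupport χ)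
    (hf : Integrable (𝓕 f)) (j : ℤ) : Continuous (Sproj χ j f) :=
  continuous_fourierInv_of_integrable (integrable_comp_smul_mul hχ hχ_supp hf _)

lemma continuous_Dproj (hχ : Continuous χ) (hχ_supp : HasCompactSupport χ)
    (hf : Integrable (𝓕 f)) (j : ℤ) : Continuous (Dproj χ j f) := by
  rw [Dproj_eq_sub hχ hχ_supp hf]
  exact (continuous_Sproj hχ hχ_supp hf _).sub (continuous_Sproj hχ hχ_supp hf _)

lemma tendsto_Sproj_atBot (hn : 1 ≤ n) (hχ : Continuous χ) (hχ_supp : HasCompactSupport χ)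
    (hf : Integrable (𝓕 f)) (x : EuclideanSpace ℝ (Fin n)) :
    Tendsto (fun j => Sproj χ j f x) atBot (𝓝 0) := by
  obtain ⟨C, hC⟩ := hχ.bounded_above_of_compact_support hχ_supp
  have h_ne : ∀ᵐ ξ : EuclideanSpace ℝ (Fin n), ξ ≠ 0 := by
    have : Nonempty (Fin n) := ⟨⟨0, hn⟩⟩
    exact Measure.ae_ne volume 0
  have h_lim := tendsto_fourierInv_of_dominated (l := atBot) (G := 0) (fun ξ => C * ‖𝓕 f ξ‖)
    (F := fun (j : ℤ) ξ => (χ ((2 : ℝ) ^ (-j) • ξ) : ℂ) * 𝓕 f ξ)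
    (Eventually.of_forall fun j => (integrable_comp_smul_mul hχ hχ_supp hf _).aestronglyMeasurable)
    (Eventually.of_forall fun j => ae_of_all _ fun ξ => by
      rw [norm_mul]
      gcongr
      simpa using hC _)
    (hf.norm.const_mul C)
    (by
      filter_upwards [h_ne] with ξ hξ
      refine tendsto_const_nhds.congr' ?_
      filter_upwards [tendsto_two_zpow_neg_atBot_atTop.eventually
        (hχ_supp.eventually_apply_smul_eq_zero hξ)] with j hj
      simp only [hj, Pi.zero_apply, Complex.ofReal_zero, zero_mul]) x
  have h_zero : 𝓕⁻ (0 : EuclideanSpace ℝ (Fin n) → ℂ) x = 0 := by simp [Real.fourierInv_eq]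
  rwa [h_zero] at h_lim

lemma tendsto_sum_range_Dproj (hn : 1 ≤ n) (hχ : Continuous χ) (hχ_supp : HasCompactSupport χ)
    (hf : Integrable (𝓕 f)) (j : ℤ) (x : EuclideanSpace ℝ (Fin n)) :
    Tendsto (fun M => ∑ i ∈ Finset.range M, Dproj χ (j - (i + 1)) f x) atTop
      (𝓝 (Sproj χ j f x)) := by
  have h_tel : ∀ M : ℕ, ∑ i ∈ Finset.range M, Dproj χ (j - (i + 1)) f x
      = Sproj χ j f x - Sproj χ (j - M) f x := fun M => by
    have h_index : ∀ i : ℤ, j - (i + 1) + 1 = j - i := fun i => by ring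
    simpa [Dproj_eq_sub hχ hχ_supp hf, h_index] using
      Finset.sum_range_sub' (fun i : ℕ => Sproj χ (j - i) f x) M
  have h_shift : Tendsto (fun M : ℕ => j - (M : ℤ)) atTop atBot :=
    tendsto_atBot.2 fun b => eventually_atTop.2 ⟨(j - b).toNat, fun M hM => by omega⟩
  simp_rw [h_tel]
  simpa using tendsto_const_nhds.sub ((tendsto_Sproj_atBot hn hχ hχ_supp hf x).comp h_shift)

lemma two_rpow_mul_eLpNorm_Dproj_le (hχ : Continuous χ) (hχ_supp : HasCompactSupport χ)
    (hf : Integrable (𝓕 f)) {p : ℝ≥0∞} (hp : 1 ≤ p) (s : ℝ) (j : ℤ) :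
    2 ^ ((j : ℝ) * s) * eLpNorm (Dproj χ j f) p volume
      ≤ 2 ^ (-s) * (2 ^ (((j + 1 : ℤ) : ℝ) * s) * eLpNorm (Sproj χ (j + 1) f) p volume)
        + 2 ^ ((j : ℝ) * s) * eLpNorm (Sproj χ j f) p volume := by
  have h_weight : (2 : ℝ≥0∞) ^ ((j : ℝ) * s) = 2 ^ (-s) * 2 ^ (((j + 1 : ℤ) : ℝ) * s) := by
    rw [← ENNReal.rpow_add _ _ two_ne_zero ENNReal.ofNat_ne_top]
    push_cast
    ring_nf
  calc 2 ^ ((j : ℝ) * s) * eLpNorm (Dproj χ j f) p volume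
      ≤ 2 ^ ((j : ℝ) * s) * (eLpNorm (Sproj χ (j + 1) f) p volume
          + eLpNorm (Sproj χ j f) p volume) := by
        rw [Dproj_eq_sub hχ hχ_supp hf]
        gcongr
        exact eLpNorm_sub_le (continuous_Sproj hχ hχ_supp hf _).aestronglyMeasurable
          (continuous_Sproj hχ hχ_supp hf _).aestronglyMeasurable hp
    _ = _ := by
        rw [mul_add]
        congr 1
        rw [h_weight, mul_assoc]

lemma two_rpow_mul_eLpNorm_Sproj_le (hn : 1 ≤ n) (hχ : Continuous χ)
    (hχ_supp : HasCompactSupport χ) (hf : Integrable (𝓕 f)) {p : ℝ≥0∞} (hp : 1 ≤ p) (s : ℝ)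
    (j : ℤ) :
    2 ^ ((j : ℝ) * s) * eLpNorm (Sproj χ j f) p volume
      ≤ ∑' i : ℕ, 2 ^ (((i : ℝ) + 1) * s)
        * (2 ^ (((j - (i + 1) : ℤ) : ℝ) * s) * eLpNorm (Dproj χ (j - (i + 1)) f) p volume) := by
  have h_weight : ∀ i : ℕ, (2 : ℝ≥0∞) ^ ((j : ℝ) * s)
      = 2 ^ (((i : ℝ) + 1) * s) * 2 ^ (((j - (i + 1) : ℤ) : ℝ) * s) := fun i => by
    rw [← ENNReal.rpow_add _ _ two_ne_zero ENNReal.ofNat_ne_top]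
    push_cast
    ring_nf
  calc 2 ^ ((j : ℝ) * s) * eLpNorm (Sproj χ j f) p volume
      ≤ 2 ^ ((j : ℝ) * s) * ∑' i : ℕ, eLpNorm (Dproj χ (j - (i + 1)) f) p volume := by
        gcongr
        exact eLpNorm_le_tsum_of_tendsto_sum_range hp
          (fun i => (continuous_Dproj hχ hχ_supp hf _).aestronglyMeasurable)
          (ae_of_all _ (tendsto_sum_range_Dproj hn hχ hχ_supp hf j))
    _ = _ := by
        rw [← ENNReal.tsum_mul_left]
        refine tsum_congr fun i => ?_
        rw [h_weight i, mul_assoc]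

end LittlewoodPaley

/-- **Equivalence of the `Δ_j` and `S_j` characterizations of negative-order Besov
norms**: for `s < 0` and `1 ≤ q ≤ ∞` there are constants `c, C > 0`, depending only on
`n`, `s`, `q` and `χ` (in particular independent of `p` and `f`), such that for every
`p ∈ [1,∞]` and every Schwartz `f`,
`c (Σ_j (2^{sj}‖Δ_j f‖_p)^q)^{1/q} ≤ (Σ_j (2^{sj}‖S_j f‖_p)^q)^{1/q}
≤ C (Σ_j (2^{sj}‖Δ_j f‖_p)^q)^{1/q}` (supremum modification if `q = ∞`). -/
theorem besov_lowFreq_equiv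
    (n : ℕ) (hn : 1 ≤ n) (χ : EuclideanSpace ℝ (Fin n) → ℝ) (hχ : IsLPCutoff χ)
    (s : ℝ) (hs : s < 0) (q : ℝ≥0∞) (hq : 1 ≤ q) :
    ∃ c C : ℝ≥0∞, 0 < c ∧ c < ∞ ∧ 0 < C ∧ C < ∞ ∧
      ∀ p : ℝ≥0∞, 1 ≤ p → ∀ f : 𝓢(EuclideanSpace ℝ (Fin n), ℂ),
        c * lqNorm q (fun j => (2 : ℝ≥0∞) ^ ((j : ℝ) * s) * eLpNorm (Dproj χ j (⇑f)) p volume)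
            ≤ lqNorm q (fun j => (2 : ℝ≥0∞) ^ ((j : ℝ) * s) * eLpNorm (Sproj χ j (⇑f)) p volume) ∧
          lqNorm q (fun j => (2 : ℝ≥0∞) ^ ((j : ℝ) * s) * eLpNorm (Sproj χ j (⇑f)) p volume)
            ≤ C * lqNorm q
                (fun j => (2 : ℝ≥0∞) ^ ((j : ℝ) * s) * eLpNorm (Dproj χ j (⇑f)) p volume) := by
  obtain ⟨hχ_smooth, hχ_supp, -⟩ := hχ
  have hχ_cont := hχ_smooth.continuous
  have h_ne_top : (2 : ℝ≥0∞) ^ (-s) + 1 ≠ ∞ := by finiteness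
  refine ⟨(2 ^ (-s) + 1)⁻¹, ∑' i : ℕ, 2 ^ (((i : ℝ) + 1) * s), ENNReal.inv_pos.2 h_ne_top,
    ENNReal.inv_lt_top.2 (by positivity),
    (ENNReal.rpow_pos two_pos ENNReal.ofNat_ne_top).trans_le (ENNReal.le_tsum 0),
    tsum_two_rpow_succ_mul_lt_top hs, fun p hp f => ?_⟩
  have hf : Integrable (𝓕 (f : EuclideanSpace ℝ (Fin n) → ℂ)) := (𝓕 f).integrable
  constructor
  · rw [ENNReal.inv_mul_le_iff (by positivity) h_ne_top]
    exact lqNorm_le_mul_of_le_shift_add hq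
      (two_rpow_mul_eLpNorm_Dproj_le hχ_cont hχ_supp hf hp s)
  · exact lqNorm_le_tsum_mul_of_le_tsum_shift hq _ (fun i => i + 1)
      (two_rpow_mul_eLpNorm_Sproj_le hn hχ_cont hχ_supp hf hp s)
end
end

section
/- Let n ≥ 1 and let f, g be Schwartz functions on ℝⁿ. Then each of the three series T_g f = Σ_{j∈ℤ} (S_{j−1} g)(Δ_j f), T_f g = Σ_{j∈ℤ} (S_{j−1} f)(Δ_j g), and R(f,g) = Σ_{i,j∈ℤ, |i−j|≤1} (Δ_i f)(Δ_j g) converges in the space of tempered distributions, and Bony's para-product formula holds: f · g = T_g f + T_f g + R(f,g) as tempered distributions. -/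
open MeasureTheory Real Complex Filter Function
open scoped ENNReal FourierTransform SchwartzMap
open scoped RealInnerProductSpace

set_option maxHeartbeats 1000000

noncomputable section

namespace BonyAux

variable {n : ℕ}


/-- low symbol -/
def ssym (χ : EuclideanSpace ℝ (Fin n) → ℝ) (j : ℤ) (ξ : EuclideanSpace ℝ (Fin n)) : ℝ := χ ((2 : ℝ) ^ (-j) • ξ)

/-- dyadic symbol -/
def dsym (χ : EuclideanSpace ℝ (Fin n) → ℝ) (j : ℤ) (ξ : EuclideanSpace ℝ (Fin n)) : ℝ := ssym χ (j + 1) ξ - ssym χ j ξ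

lemma dsym_eq (χ : EuclideanSpace ℝ (Fin n) → ℝ) (j : ℤ) (ξ : EuclideanSpace ℝ (Fin n)) :
    dsym χ j ξ = χ ((2 : ℝ) ^ (-(j+1)) • ξ) - χ ((2 : ℝ) ^ (-j) • ξ) := rfl

lemma norm_zpow_smul (k : ℤ) (ξ : EuclideanSpace ℝ (Fin n)) : ‖(2 : ℝ) ^ k • ξ‖ = 2 ^ k * ‖ξ‖ := by
  rw [norm_smul, Real.norm_eq_abs, abs_of_pos (zpow_pos two_pos k)]

section cutoff

variable {χ : EuclideanSpace ℝ (Fin n) → ℝ} (hχ : IsLPCutoff χ)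
include hχ

lemma ssym_eq_one {j : ℤ} {ξ : EuclideanSpace ℝ (Fin n)} (h : ‖ξ‖ ≤ 3/4 * 2 ^ j) : ssym χ j ξ = 1 := by
  apply hχ.2.2.2.2.2.1
  rw [norm_zpow_smul]
  rw [zpow_neg]
  rw [inv_mul_le_iff₀ (zpow_pos two_pos j)]
  linarith

lemma ssym_eq_zero {j : ℤ} {ξ : EuclideanSpace ℝ (Fin n)} (h : 4/3 * 2 ^ j < ‖ξ‖) : ssym χ j ξ = 0 := by
  apply hχ.2.2.2.2.2.2
  rw [norm_zpow_smul, zpow_neg]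
  rw [lt_inv_mul_iff₀ (zpow_pos two_pos j)]
  linarith

lemma abs_ssym_le (j : ℤ) (ξ : EuclideanSpace ℝ (Fin n)) : |ssym χ j ξ| ≤ 1 := by
  have h1 := hχ.2.2.2.1 ((2 : ℝ) ^ (-j) • ξ)
  have h2 := hχ.2.2.2.2.1 ((2 : ℝ) ^ (-j) • ξ)
  rw [abs_le]
  constructor
  · simp only [ssym]; linarith
  · simpa only [ssym] using h2

lemma abs_dsym_le (j : ℤ) (ξ : EuclideanSpace ℝ (Fin n)) : |dsym χ j ξ| ≤ 1 := by
  have h1 := hχ.2.2.2.1 ((2 : ℝ) ^ (-(j+1)) • ξ)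
  have h2 := hχ.2.2.2.2.1 ((2 : ℝ) ^ (-(j+1)) • ξ)
  have h3 := hχ.2.2.2.1 ((2 : ℝ) ^ (-j) • ξ)
  have h4 := hχ.2.2.2.2.1 ((2 : ℝ) ^ (-j) • ξ)
  rw [dsym_eq]; rw [abs_le]; constructor <;> nlinarith

lemma dsym_eq_zero_low {j : ℤ} {ξ : EuclideanSpace ℝ (Fin n)} (h : ‖ξ‖ ≤ 3/4 * 2 ^ j) : dsym χ j ξ = 0 := by
  have h1 : ‖ξ‖ ≤ 3/4 * 2 ^ (j+1) := by
    refine h.trans ?_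
    have : (2:ℝ) ^ j ≤ 2 ^ (j+1) := by
      apply zpow_le_zpow_right₀ one_le_two; omega
    linarith
  rw [dsym, ssym_eq_one hχ h, ssym_eq_one hχ h1, sub_self]

lemma dsym_eq_zero_high {j : ℤ} {ξ : EuclideanSpace ℝ (Fin n)} (h : 8/3 * 2 ^ j < ‖ξ‖) : dsym χ j ξ = 0 := by
  have h1 : 4/3 * 2 ^ (j+1) < ‖ξ‖ := by
    rw [zpow_add₀ (two_ne_zero)]; push_cast; linarith
  have h2 : 4/3 * 2 ^ j < ‖ξ‖ := by
    have : (2:ℝ) ^ j ≤ 2 ^ (j+1) := by apply zpow_le_zpow_right₀ one_le_two; omega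
    nlinarith [zpow_pos (show (0:ℝ) < 2 by norm_num) j]
  rw [dsym, ssym_eq_zero hχ h1, ssym_eq_zero hχ h2, sub_self]

lemma continuous_ssym (j : ℤ) : Continuous (ssym χ j) :=
  hχ.1.continuous.comp (continuous_const_smul _)

lemma continuous_dsym (j : ℤ) : Continuous (dsym χ j) :=
  ((continuous_ssym hχ (j+1)).sub (continuous_ssym hχ j))

end cutoff

section fourier

variable {n : ℕ} {χ : EuclideanSpace ℝ (Fin n) → ℝ}

lemma fourier_integrable (f : 𝓢(EuclideanSpace ℝ (Fin n), ℂ)) : Integrable (𝓕 ⇑f) := by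
  have h : ⇑(SchwartzMap.fourierTransformCLM ℂ f) = 𝓕 ⇑f :=
    rfl
  rw [← h]
  exact (SchwartzMap.fourierTransformCLM ℂ f).integrable

lemma norm_fourierIntegralInv_le (u : EuclideanSpace ℝ (Fin n) → ℂ)
    (x : EuclideanSpace ℝ (Fin n)) : ‖𝓕⁻ u x‖ ≤ ∫ ξ, ‖u ξ‖ :=
  VectorFourier.norm_fourierIntegral_le_integral_norm _ _ _ _ _

lemma continuous_fourierIntegralInv {u : EuclideanSpace ℝ (Fin n) → ℂ} (hu : Integrable u) :
    Continuous (𝓕⁻ u) := by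
  apply VectorFourier.fourierIntegral_continuous Real.continuous_fourierChar _ hu
  exact (continuous_inner (𝕜 := ℝ)).neg

lemma integrable_mul_fourier {m : EuclideanSpace ℝ (Fin n) → ℝ} (hm : Continuous m)
    (hbd : ∀ ξ, |m ξ| ≤ 1) (f : 𝓢(EuclideanSpace ℝ (Fin n), ℂ)) :
    Integrable (fun ξ => ((m ξ : ℝ) : ℂ) * 𝓕 ⇑f ξ) := by
  refine (fourier_integrable f).bdd_mul (c := 1) ?_ (Eventually.of_forall ?_)
  · exact (Complex.continuous_ofReal.comp hm).aestronglyMeasurable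
  · intro ξ; simpa using hbd ξ

lemma Dproj_eq (j : ℤ) (f : EuclideanSpace ℝ (Fin n) → ℂ) :
    Dproj χ j f = 𝓕⁻ (fun ξ => ((dsym χ j ξ : ℝ) : ℂ) * 𝓕 f ξ) := rfl

lemma Sproj_eq (j : ℤ) (f : EuclideanSpace ℝ (Fin n) → ℂ) :
    Sproj χ j f = 𝓕⁻ (fun ξ => ((ssym χ j ξ : ℝ) : ℂ) * 𝓕 f ξ) := rfl

/-- the `L¹` bound for a block -/
def dnorm (χ : EuclideanSpace ℝ (Fin n) → ℝ) (f : 𝓢(EuclideanSpace ℝ (Fin n), ℂ)) (j : ℤ) : ℝ :=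
  ∫ ξ, |dsym χ j ξ| * ‖𝓕 ⇑f ξ‖

/-- the `L¹` norm of the Fourier transform -/
def fInt (f : 𝓢(EuclideanSpace ℝ (Fin n), ℂ)) : ℝ := ∫ ξ : EuclideanSpace ℝ (Fin n), ‖𝓕 ⇑f ξ‖

lemma dnorm_nonneg (f : 𝓢(EuclideanSpace ℝ (Fin n), ℂ)) (j : ℤ) : 0 ≤ dnorm χ f j :=
  integral_nonneg fun ξ => mul_nonneg (abs_nonneg _) (norm_nonneg _)

lemma fInt_nonneg (f : 𝓢(EuclideanSpace ℝ (Fin n), ℂ)) : 0 ≤ fInt f :=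
  integral_nonneg fun ξ => norm_nonneg _

variable (hχ : IsLPCutoff χ)
include hχ

lemma norm_Dproj_le (f : 𝓢(EuclideanSpace ℝ (Fin n), ℂ)) (j : ℤ) (x : EuclideanSpace ℝ (Fin n)) :
    ‖Dproj χ j ⇑f x‖ ≤ dnorm χ f j := by
  rw [Dproj_eq]
  refine (norm_fourierIntegralInv_le _ x).trans (le_of_eq ?_)
  apply integral_congr_ae
  filter_upwards with ξ
  simp [dnorm]

lemma norm_Sproj_le (g : 𝓢(EuclideanSpace ℝ (Fin n), ℂ)) (j : ℤ) (x : EuclideanSpace ℝ (Fin n)) :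
    ‖Sproj χ j ⇑g x‖ ≤ fInt g := by
  rw [Sproj_eq]
  refine (norm_fourierIntegralInv_le _ x).trans ?_
  refine integral_mono ?_ ?_ ?_
  · exact (integrable_mul_fourier (continuous_ssym hχ j) (abs_ssym_le hχ j) g).norm
  · exact (fourier_integrable g).norm
  · intro ξ
    have h := abs_ssym_le hχ j ξ
    have h2 : ‖((ssym χ j ξ : ℝ) : ℂ) * 𝓕 ⇑g ξ‖ = |ssym χ j ξ| * ‖𝓕 ⇑g ξ‖ := by
      rw [norm_mul]; simp
    show ‖((ssym χ j ξ : ℝ) : ℂ) * 𝓕 ⇑g ξ‖ ≤ ‖𝓕 ⇑g ξ‖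
    rw [h2]
    nlinarith [norm_nonneg (𝓕 ⇑g ξ), abs_nonneg (ssym χ j ξ)]

lemma continuous_Dproj (f : 𝓢(EuclideanSpace ℝ (Fin n), ℂ)) (j : ℤ) :
    Continuous (Dproj χ j ⇑f) := by
  rw [Dproj_eq]
  exact continuous_fourierIntegralInv
    (integrable_mul_fourier (continuous_dsym hχ j) (abs_dsym_le hχ j) f)

lemma continuous_Sproj (g : 𝓢(EuclideanSpace ℝ (Fin n), ℂ)) (j : ℤ) :
    Continuous (Sproj χ j ⇑g) := by
  rw [Sproj_eq]
  exact continuous_fourierIntegralInv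
    (integrable_mul_fourier (continuous_ssym hχ j) (abs_ssym_le hχ j) g)

end fourier

section decay

variable {n : ℕ} {χ : EuclideanSpace ℝ (Fin n) → ℝ}

lemma fourier_sup_bound (f : 𝓢(EuclideanSpace ℝ (Fin n), ℂ)) :
    ∃ C, 0 ≤ C ∧ ∀ ξ, ‖𝓕 ⇑f ξ‖ ≤ C := by
  set g := SchwartzMap.fourierTransformCLM ℂ f with hg
  have hco : ⇑g = 𝓕 ⇑f := rfl
  obtain ⟨C, hCpos, hC⟩ := g.decay 0 0
  refine ⟨C, hCpos.le, fun ξ => ?_⟩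
  have := hC ξ
  simpa [hco, norm_iteratedFDeriv_zero] using this

lemma integrable_norm_mul_fourier (f : 𝓢(EuclideanSpace ℝ (Fin n), ℂ)) :
    Integrable (fun ξ => ‖ξ‖ * ‖𝓕 ⇑f ξ‖) := by
  set g := SchwartzMap.fourierTransformCLM ℂ f with hg
  have hco : ⇑g = 𝓕 ⇑f := rfl
  have := g.integrable_pow_mul (volume) 1
  simpa [hco] using this

/-- the first moment of the Fourier transform -/
def fMom (f : 𝓢(EuclideanSpace ℝ (Fin n), ℂ)) : ℝ :=
  ∫ ξ : EuclideanSpace ℝ (Fin n), ‖ξ‖ * ‖𝓕 ⇑f ξ‖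

variable (hχ : IsLPCutoff χ)
include hχ

lemma integrable_dsym_mul (f : 𝓢(EuclideanSpace ℝ (Fin n), ℂ)) (j : ℤ) :
    Integrable (fun ξ => |dsym χ j ξ| * ‖𝓕 ⇑f ξ‖) := by
  have h := (integrable_mul_fourier (continuous_dsym hχ j) (abs_dsym_le hχ j) f).norm
  refine h.congr ?_
  filter_upwards with ξ
  rw [norm_mul]; simp

lemma dnorm_le_high (f : 𝓢(EuclideanSpace ℝ (Fin n), ℂ)) {j : ℤ} (hj : 0 ≤ j) :
    dnorm χ f j ≤ 4/3 * 2 ^ (-j) * fMom f := by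
  have h2j : (0:ℝ) < 2 ^ j := zpow_pos two_pos j
  have h2j' : (0:ℝ) < 2 ^ (-j) := zpow_pos two_pos (-j)
  have hinv : (2:ℝ) ^ (-j) * 2 ^ j = 1 := by
    rw [← zpow_add₀ (two_ne_zero : (2:ℝ) ≠ 0)]; simp
  rw [dnorm, fMom, ← integral_const_mul]
  refine integral_mono (integrable_dsym_mul hχ f j)
    (((integrable_norm_mul_fourier f).const_mul _)) fun ξ => ?_
  by_cases hlow : ‖ξ‖ ≤ 3/4 * 2 ^ j
  · rw [dsym_eq_zero_low hχ hlow]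
    simp only [abs_zero, zero_mul]
    positivity
  · push_neg at hlow
    have h1 : |dsym χ j ξ| ≤ 1 := abs_dsym_le hχ j ξ
    have h3 : (1:ℝ) ≤ 4/3 * 2 ^ (-j) * ‖ξ‖ := by nlinarith
    have h4 : (0:ℝ) ≤ ‖𝓕 ⇑f ξ‖ := norm_nonneg _
    calc |dsym χ j ξ| * ‖𝓕 ⇑f ξ‖ ≤ 1 * ‖𝓕 ⇑f ξ‖ :=
          mul_le_mul_of_nonneg_right h1 h4
      _ ≤ (4/3 * 2 ^ (-j) * ‖ξ‖) * ‖𝓕 ⇑f ξ‖ := by nlinarith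
      _ = 4/3 * 2 ^ (-j) * (‖ξ‖ * ‖𝓕 ⇑f ξ‖) := by ring

lemma dnorm_le_low (hn : 1 ≤ n) (f : 𝓢(EuclideanSpace ℝ (Fin n), ℂ)) {j : ℤ} (hj : j ≤ 0)
    {C : ℝ} (hC0 : 0 ≤ C) (hC : ∀ ξ, ‖𝓕 ⇑f ξ‖ ≤ C) :
    dnorm χ f j ≤ (8/3) ^ n * (volume (Metric.ball (0 : EuclideanSpace ℝ (Fin n)) 1)).toReal
      * C * 2 ^ j := by
  have h2j : (0:ℝ) < 2 ^ j := zpow_pos two_pos j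
  set r : ℝ := 8/3 * 2 ^ j with hr
  have hr0 : 0 ≤ r := by positivity
  have hvol : (volume (Metric.closedBall (0 : EuclideanSpace ℝ (Fin n)) r)).toReal
      = r ^ n * (volume (Metric.ball (0 : EuclideanSpace ℝ (Fin n)) 1)).toReal := by
    rw [MeasureTheory.Measure.addHaar_closedBall _ _ hr0]
    rw [ENNReal.toReal_mul, ENNReal.toReal_ofReal (by positivity)]
    rw [finrank_euclideanSpace_fin]
  have hb : dnorm χ f j ≤ C * (volume (Metric.closedBall
      (0 : EuclideanSpace ℝ (Fin n)) r)).toReal := by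
    rw [dnorm]
    have hind : ∀ ξ, |dsym χ j ξ| * ‖𝓕 ⇑f ξ‖ ≤
        Set.indicator (Metric.closedBall (0 : EuclideanSpace ℝ (Fin n)) r) (fun _ => C) ξ := by
      intro ξ
      by_cases hmem : ξ ∈ Metric.closedBall (0 : EuclideanSpace ℝ (Fin n)) r
      · rw [Set.indicator_of_mem hmem]
        have := abs_dsym_le hχ j ξ
        have h2 := hC ξ
        nlinarith [abs_nonneg (dsym χ j ξ), norm_nonneg (𝓕 ⇑f ξ)]
      · rw [Set.indicator_of_notMem hmem]
        have hout : 8/3 * 2 ^ j < ‖ξ‖ := by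
          simp only [Metric.mem_closedBall, dist_zero_right, not_le] at hmem
          exact hmem
        rw [dsym_eq_zero_high hχ hout]
        simp
    refine le_trans (integral_mono (integrable_dsym_mul hχ f j) ?_ hind) (le_of_eq ?_)
    · rw [integrable_indicator_iff measurableSet_closedBall]
      apply integrableOn_const
      exact measure_closedBall_lt_top.ne
      exact enorm_ne_top
    · rw [integral_indicator_const _ measurableSet_closedBall]
      simp [mul_comm, Measure.real]
  refine hb.trans ?_
  have hrn : r ^ n ≤ (8/3) ^ n * 2 ^ j := by
    rw [hr, mul_pow]
    have h1 : ((2:ℝ) ^ j) ^ n ≤ ((2:ℝ) ^ j) ^ 1 := by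
      apply pow_le_pow_of_le_one (le_of_lt h2j) _ hn
      calc (2:ℝ) ^ j ≤ 2 ^ (0:ℤ) := zpow_le_zpow_right₀ one_le_two hj
        _ = 1 := by norm_num
    rw [pow_one] at h1
    have h83 : (0:ℝ) ≤ (8/3) ^ n := by positivity
    nlinarith
  rw [hvol]
  have hvol1 : (0:ℝ) ≤ (volume (Metric.ball (0 : EuclideanSpace ℝ (Fin n)) 1)).toReal :=
    ENNReal.toReal_nonneg
  have h5 : C * (volume (Metric.ball (0 : EuclideanSpace ℝ (Fin n)) 1)).toReal * (r ^ n)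
      ≤ C * (volume (Metric.ball (0 : EuclideanSpace ℝ (Fin n)) 1)).toReal
        * ((8/3) ^ n * 2 ^ j) :=
    mul_le_mul_of_nonneg_left hrn (by positivity)
  nlinarith [h5]

omit hχ in
lemma summable_two_zpow_neg_abs : Summable (fun j : ℤ => (2:ℝ) ^ (-(|j| : ℤ))) := by
  apply Summable.of_nat_of_neg
  · have : (fun m : ℕ => (2:ℝ) ^ (-(|(m : ℤ)| : ℤ))) = fun m : ℕ => ((2:ℝ)⁻¹) ^ m := by
      ext m
      rw [abs_of_nonneg (Int.natCast_nonneg m), zpow_neg, ← zpow_natCast, inv_zpow]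
    rw [this]
    exact summable_geometric_of_lt_one (by norm_num) (by norm_num)
  · have : (fun m : ℕ => (2:ℝ) ^ (-(|(-(m : ℤ))| : ℤ))) = fun m : ℕ => ((2:ℝ)⁻¹) ^ m := by
      ext m
      rw [abs_neg, abs_of_nonneg (Int.natCast_nonneg m), zpow_neg, ← zpow_natCast, inv_zpow]
    rw [this]
    exact summable_geometric_of_lt_one (by norm_num) (by norm_num)

lemma exists_dnorm_bound (hn : 1 ≤ n) (f : 𝓢(EuclideanSpace ℝ (Fin n), ℂ)) :
    ∃ C, 0 ≤ C ∧ ∀ j, dnorm χ f j ≤ C * 2 ^ (-(|j| : ℤ)) := by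
  obtain ⟨Cs, hC0, hC⟩ := fourier_sup_bound f
  set A := 4/3 * fMom f with hA
  set B := (8/3) ^ n * (volume (Metric.ball (0 : EuclideanSpace ℝ (Fin n)) 1)).toReal * Cs with hB
  have hAnn : 0 ≤ A := by
    have : 0 ≤ fMom f := integral_nonneg fun ξ => mul_nonneg (norm_nonneg _) (norm_nonneg _)
    positivity
  have hBnn : 0 ≤ B := by positivity
  refine ⟨max A B, le_max_of_le_left hAnn, fun j => ?_⟩
  rcases le_or_gt 0 j with hj | hj
  · have := dnorm_le_high hχ f hj
    rw [abs_of_nonneg hj]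
    calc dnorm χ f j ≤ 4/3 * 2 ^ (-j) * fMom f := this
      _ = A * 2 ^ (-j) := by ring
      _ ≤ max A B * 2 ^ (-j) := by
          have := zpow_pos (two_pos : (0:ℝ) < 2) (-j)
          nlinarith [le_max_left A B]
  · have hj' : j ≤ 0 := le_of_lt hj
    have := dnorm_le_low hχ hn f hj' hC0 hC
    rw [abs_of_nonpos hj', neg_neg]
    calc dnorm χ f j ≤ B * 2 ^ j := this
      _ ≤ max A B * 2 ^ j := by
          have := zpow_pos (two_pos : (0:ℝ) < 2) j
          nlinarith [le_max_right A B]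

lemma summable_dnorm (hn : 1 ≤ n) (f : 𝓢(EuclideanSpace ℝ (Fin n), ℂ)) :
    Summable (dnorm χ f) := by
  obtain ⟨C, hC0, hC⟩ := exists_dnorm_bound hχ hn f
  exact Summable.of_nonneg_of_le (fun j => dnorm_nonneg f j) hC
    (summable_two_zpow_neg_abs.mul_left C)

end decay

section telescope

variable {n : ℕ} {χ : EuclideanSpace ℝ (Fin n) → ℝ}

lemma sum_Icc_telescope (c : ℤ → ℝ) (M : ℤ) : ∀ K, M ≤ K →
    ∑ j ∈ Finset.Icc M K, (c (j+1) - c j) = c (K+1) - c M := by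
  refine Int.le_induction ?_ ?_
  · simp
  · intro K hK ih
    have hins : Finset.Icc M (K+1) = insert (K+1) (Finset.Icc M K) := by
      ext a; simp only [Finset.mem_Icc, Finset.mem_insert]; omega
    rw [hins, Finset.sum_insert (by simp only [Finset.mem_Icc]; omega), ih]
    ring

lemma hasSum_telescope {c : ℤ → ℝ} {a b : ℝ} {M N : ℤ}
    (hM : ∀ j ≤ M, c j = a) (hN : ∀ j, N ≤ j → c j = b) :
    HasSum (fun j => c (j+1) - c j) (b - a) := by
  set K := max M N with hK
  have hMK : M ≤ K := le_max_left _ _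
  have hsupp : ∀ j ∉ Finset.Icc M K, c (j+1) - c j = 0 := by
    intro j hj
    simp only [Finset.mem_Icc, not_and, not_le] at hj
    rcases le_or_gt j (M - 1) with h | h
    · rw [hM (j+1) (by omega), hM j (by omega), sub_self]
    · have hjK : K < j := hj (by omega)
      rw [hN (j+1) (by omega), hN j (by omega), sub_self]
  have : HasSum (fun j => c (j+1) - c j) _ := hasSum_sum_of_ne_finset_zero hsupp
  rwa [sum_Icc_telescope c M K hMK, hN (K+1) (by omega), hM M le_rfl] at this

variable (hχ : IsLPCutoff χ)
include hχ

lemma exists_ssym_bounds {ξ : EuclideanSpace ℝ (Fin n)} (hξ : ξ ≠ 0) :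
    ∃ M N : ℤ, (∀ j ≤ M, ssym χ j ξ = 0) ∧ (∀ j, N ≤ j → ssym χ j ξ = 1) := by
  have hpos : 0 < ‖ξ‖ := norm_pos_iff.2 hξ
  obtain ⟨m₁, hm₁⟩ := pow_unbounded_of_one_lt (‖ξ‖ * (4/3)) (one_lt_two (α := ℝ))
  obtain ⟨m₂, hm₂⟩ := pow_unbounded_of_one_lt ((4/3) / ‖ξ‖) (one_lt_two (α := ℝ))
  refine ⟨-(m₂ : ℤ), (m₁ : ℤ), ?_, ?_⟩
  · intro j hj
    apply ssym_eq_zero hχ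
    have h1 : (2:ℝ) ^ j ≤ 2 ^ (-(m₂:ℤ)) := zpow_le_zpow_right₀ one_le_two hj
    have h2 : (2:ℝ) ^ (-(m₂:ℤ)) = ((2:ℝ) ^ m₂)⁻¹ := by
      rw [zpow_neg, zpow_natCast]
    have h3 : (0:ℝ) < 2 ^ m₂ := by positivity
    have h4 : (4/3 : ℝ) / ‖ξ‖ < 2 ^ m₂ := hm₂
    have h5 : ((2:ℝ) ^ m₂)⁻¹ < (3/4) * ‖ξ‖ := by
      rw [inv_lt_iff_one_lt_mul₀ h3]
      rw [div_lt_iff₀ hpos] at h4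
      nlinarith
    calc 4/3 * (2:ℝ) ^ j ≤ 4/3 * 2 ^ (-(m₂:ℤ)) := by linarith
      _ = 4/3 * ((2:ℝ) ^ m₂)⁻¹ := by rw [h2]
      _ < ‖ξ‖ := by nlinarith
  · intro j hj
    apply ssym_eq_one hχ
    have h1 : (2:ℝ) ^ (m₁:ℤ) ≤ 2 ^ j := zpow_le_zpow_right₀ one_le_two hj
    have h2 : (2:ℝ) ^ (m₁:ℤ) = (2:ℝ) ^ m₁ := zpow_natCast 2 m₁
    nlinarith

lemma hasSum_dsym {ξ : EuclideanSpace ℝ (Fin n)} (hξ : ξ ≠ 0) :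
    HasSum (fun j => dsym χ j ξ) 1 := by
  obtain ⟨M, N, hM, hN⟩ := exists_ssym_bounds hχ hξ
  have := hasSum_telescope (c := fun j => ssym χ j ξ) (a := 0) (b := 1) hM hN
  simpa [dsym] using this

lemma hasSum_dsym_restrict (k : ℤ) {ξ : EuclideanSpace ℝ (Fin n)} (hξ : ξ ≠ 0) :
    HasSum (fun j => if j ≤ k - 2 then dsym χ j ξ else 0) (ssym χ (k-1) ξ) := by
  obtain ⟨M, N, hM, _⟩ := exists_ssym_bounds hχ hξ
  set c : ℤ → ℝ := fun j => if j ≤ k-1 then ssym χ j ξ else ssym χ (k-1) ξ with hc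
  have heq : (fun j => if j ≤ k - 2 then dsym χ j ξ else 0)
      = fun j => c (j+1) - c j := by
    funext j
    rcases le_or_gt j (k-2) with h | h
    · rw [if_pos h]
      have h1 : j + 1 ≤ k - 1 := by omega
      have h2 : j ≤ k - 1 := by omega
      simp only [hc, if_pos h1, if_pos h2]
      rfl
    · rw [if_neg (by omega)]
      rcases eq_or_lt_of_le (show k - 1 ≤ j by omega) with h3 | h3
      · subst h3
        show 0 = c (k - 1 + 1) - c (k - 1)
        have e1 : k - 1 + 1 = k := by omega
        rw [e1]
        simp only [hc, if_neg (show ¬ (k:ℤ) ≤ k-1 by omega), if_pos (le_refl (k-1))]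
        ring
      · simp only [hc, if_neg (by omega : ¬ j + 1 ≤ k - 1), if_neg (by omega : ¬ j ≤ k - 1),
          sub_self]
  have hM' : ∀ j ≤ min M (k-1), c j = 0 := by
    intro j hj
    simp only [hc, if_pos (by omega : j ≤ k - 1)]
    exact hM j (by omega)
  have hN' : ∀ j, k ≤ j → c j = ssym χ (k-1) ξ := by
    intro j hj
    simp only [hc, if_neg (by omega : ¬ j ≤ k - 1)]
  have := hasSum_telescope hM' hN'
  rw [sub_zero] at this
  rwa [heq]

end telescope

section core

variable {n : ℕ} {χ : EuclideanSpace ℝ (Fin n) → ℝ}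

lemma continuous_fourier_coe (f : 𝓢(EuclideanSpace ℝ (Fin n), ℂ)) : Continuous (𝓕 ⇑f) := by
  change Continuous ⇑(SchwartzMap.fourierTransformCLM ℂ f)
  exact (SchwartzMap.fourierTransformCLM ℂ f).continuous

variable (hχ : IsLPCutoff χ)
include hχ

lemma hasSum_proj_core (hn : 1 ≤ n) (f : 𝓢(EuclideanSpace ℝ (Fin n), ℂ))
    (x : EuclideanSpace ℝ (Fin n)) (m : ℤ → EuclideanSpace ℝ (Fin n) → ℝ)
    (hcont : ∀ j, Continuous (m j))
    (habs : ∀ j ξ, |m j ξ| ≤ |dsym χ j ξ|)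
    (σ : EuclideanSpace ℝ (Fin n) → ℝ)
    (hσ : ∀ ξ : EuclideanSpace ℝ (Fin n), ξ ≠ 0 → HasSum (fun j => m j ξ) (σ ξ)) :
    HasSum (fun j => 𝓕⁻ (fun ξ => ((m j ξ : ℝ) : ℂ) * 𝓕 ⇑f ξ) x)
      (𝓕⁻ (fun ξ => ((σ ξ : ℝ) : ℂ) * 𝓕 ⇑f ξ) x) := by
  haveI : Nonempty (Fin n) := ⟨⟨0, hn⟩⟩
  haveI : Nontrivial (EuclideanSpace ℝ (Fin n)) := inferInstance
  have hm1 : ∀ j ξ, |m j ξ| ≤ 1 := fun j ξ => (habs j ξ).trans (abs_dsym_le hχ j ξ)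
  have hint : ∀ j, Integrable (fun ξ => ((m j ξ : ℝ) : ℂ) * 𝓕 ⇑f ξ) :=
    fun j => integrable_mul_fourier (hcont j) (hm1 j) f
  set u : ℤ → EuclideanSpace ℝ (Fin n) → ℂ := fun j ξ =>
    Complex.exp (((2 * π * ⟪ξ, x⟫ : ℝ) : ℂ) * Complex.I) * (((m j ξ : ℝ) : ℂ) * 𝓕 ⇑f ξ)
    with hu
  have hTeq : ∀ j, 𝓕⁻ (fun ξ => ((m j ξ : ℝ) : ℂ) * 𝓕 ⇑f ξ) x = ∫ ξ, u j ξ := by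
    intro j
    rw [Real.fourierInv_eq']
    simp_rw [smul_eq_mul]
    rfl
  have hnorm_u : ∀ j ξ, ‖u j ξ‖ = |m j ξ| * ‖𝓕 ⇑f ξ‖ := by
    intro j ξ
    simp only [hu, norm_mul, Complex.norm_exp_ofReal_mul_I, one_mul, Complex.norm_real,
      Real.norm_eq_abs]
  have hcont_u : ∀ j, Continuous (u j) := by
    intro j
    apply Continuous.mul
    · apply Complex.continuous_exp.comp
      apply Continuous.mul _ continuous_const
      exact Complex.continuous_ofReal.comp
        ((continuous_const.mul (continuous_id.inner continuous_const)))
    · exact (Complex.continuous_ofReal.comp (hcont j)).mul (continuous_fourier_coe f)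
  have hmeas : ∀ j, AEStronglyMeasurable (u j) volume :=
    fun j => (hcont_u j).aestronglyMeasurable
  have hint_bnd : ∀ j, Integrable (fun ξ => |dsym χ j ξ| * ‖𝓕 ⇑f ξ‖) :=
    fun j => integrable_dsym_mul hχ f j
  have hint_u : ∀ j, Integrable (fun ξ => |m j ξ| * ‖𝓕 ⇑f ξ‖) := by
    intro j
    refine (hint j).norm.congr ?_
    filter_upwards with ξ
    rw [norm_mul]; simp
  have hle : ∀ j, (∫ ξ, |m j ξ| * ‖𝓕 ⇑f ξ‖) ≤ dnorm χ f j := by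
    intro j
    refine integral_mono (hint_u j) (hint_bnd j) fun ξ => ?_
    exact mul_le_mul_of_nonneg_right (habs j ξ) (norm_nonneg _)
  -- summability of the integrals
  have hsum : Summable (fun j => 𝓕⁻ (fun ξ => ((m j ξ : ℝ) : ℂ) * 𝓕 ⇑f ξ) x) := by
    refine Summable.of_norm_bounded (summable_dnorm hχ hn f) fun j => ?_
    refine (norm_fourierIntegralInv_le _ x).trans ?_
    refine le_trans (le_of_eq ?_) (hle j)
    apply integral_congr_ae
    filter_upwards with ξ
    rw [norm_mul]; simp
  -- the lintegral bound
  have hlin : ∑' j, ∫⁻ ξ, ‖u j ξ‖₊ ≠ ∞ := by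
    have h1 : ∀ j, ∫⁻ ξ, (‖u j ξ‖₊ : ℝ≥0∞) ≤ ENNReal.ofReal (dnorm χ f j) := by
      intro j
      have e1 : ∫⁻ ξ, (‖u j ξ‖₊ : ℝ≥0∞) ≤ ∫⁻ ξ, ENNReal.ofReal (|dsym χ j ξ| * ‖𝓕 ⇑f ξ‖) := by
        apply lintegral_mono
        intro ξ
        show (‖u j ξ‖₊ : ℝ≥0∞) ≤ ENNReal.ofReal (|dsym χ j ξ| * ‖𝓕 ⇑f ξ‖)
        rw [← enorm_eq_nnnorm, ← ofReal_norm, hnorm_u j ξ]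
        exact ENNReal.ofReal_le_ofReal
          (mul_le_mul_of_nonneg_right (habs j ξ) (norm_nonneg _))
      refine e1.trans (le_of_eq ?_)
      rw [← ofReal_integral_eq_lintegral_ofReal (hint_bnd j)]
      · rfl
      · filter_upwards with ξ
        exact mul_nonneg (abs_nonneg _) (norm_nonneg _)
    refine ne_top_of_le_ne_top ?_ (ENNReal.tsum_le_tsum h1)
    rw [← ENNReal.ofReal_tsum_of_nonneg (fun j => dnorm_nonneg f j) (summable_dnorm hχ hn f)]
    exact ENNReal.ofReal_ne_top
  have key := integral_tsum hmeas hlin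
  -- a.e. pointwise identification of the tsum
  have h0 : ∀ᵐ ξ : EuclideanSpace ℝ (Fin n) ∂volume, ξ ≠ 0 := by
    refine MeasureTheory.ae_iff.2 ?_
    simpa using measure_singleton (0 : EuclideanSpace ℝ (Fin n))
  have hae : (fun ξ => ∑' j, u j ξ) =ᵐ[volume] fun ξ =>
      Complex.exp (((2 * π * ⟪ξ, x⟫ : ℝ) : ℂ) * Complex.I) * (((σ ξ : ℝ) : ℂ) * 𝓕 ⇑f ξ) := by
    filter_upwards [h0] with ξ hξ
    have hs : HasSum (fun j => u j ξ)
        (Complex.exp (((2 * π * ⟪ξ, x⟫ : ℝ) : ℂ) * Complex.I) * (((σ ξ : ℝ) : ℂ) * 𝓕 ⇑f ξ)) := by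
      have h2 : HasSum (fun j => ((m j ξ : ℝ) : ℂ)) ((σ ξ : ℝ) : ℂ) :=
        Complex.ofRealCLM.hasSum (hσ ξ hξ)
      exact ((h2.mul_right (𝓕 ⇑f ξ)).mul_left _)
    exact hs.tsum_eq
  rw [Summable.hasSum_iff hsum]
  have target : 𝓕⁻ (fun ξ => ((σ ξ : ℝ) : ℂ) * 𝓕 ⇑f ξ) x = ∫ ξ,
      Complex.exp (((2 * π * ⟪ξ, x⟫ : ℝ) : ℂ) * Complex.I) * (((σ ξ : ℝ) : ℂ) * 𝓕 ⇑f ξ) := by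
    rw [Real.fourierInv_eq']
    simp_rw [smul_eq_mul]
  rw [target, ← integral_congr_ae hae, key]
  apply tsum_congr
  intro j
  exact hTeq j

lemma hasSum_Dproj (hn : 1 ≤ n) (f : 𝓢(EuclideanSpace ℝ (Fin n), ℂ))
    (x : EuclideanSpace ℝ (Fin n)) :
    HasSum (fun j => Dproj χ j ⇑f x) (f x) := by
  have h := hasSum_proj_core hχ hn f x (dsym χ) (fun j => continuous_dsym hχ j)
    (fun j ξ => le_refl _) (fun _ => 1) (fun ξ hξ => hasSum_dsym hχ hξ)
  have e1 : 𝓕⁻ (fun ξ => (((1 : ℝ) : ℂ)) * 𝓕 ⇑f ξ) x = f x := by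
    have : (fun ξ => (((1:ℝ) : ℂ)) * 𝓕 ⇑f ξ) = 𝓕 ⇑f := by
      funext ξ; simp
    rw [this]
    have := Continuous.fourierInv_fourier_eq f.continuous f.integrable (fourier_integrable f)
    exact congrFun this x
  rw [e1] at h
  exact h.congr_fun fun j => by rw [Dproj_eq]

lemma hasSum_Dproj_restrict (hn : 1 ≤ n) (k : ℤ) (f : 𝓢(EuclideanSpace ℝ (Fin n), ℂ))
    (x : EuclideanSpace ℝ (Fin n)) :
    HasSum (fun j => if j ≤ k - 2 then Dproj χ j ⇑f x else 0) (Sproj χ (k-1) ⇑f x) := by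
  have h := hasSum_proj_core hχ hn f x (fun j ξ => if j ≤ k - 2 then dsym χ j ξ else 0)
    (fun j => by
      by_cases hj : j ≤ k - 2
      · simp only [if_pos hj]; exact continuous_dsym hχ j
      · simp only [if_neg hj]; exact continuous_const)
    (fun j ξ => by
      by_cases hj : j ≤ k - 2
      · simp [if_pos hj]
      · simp [if_neg hj])
    (ssym χ (k-1)) (fun ξ hξ => hasSum_dsym_restrict hχ k hξ)
  rw [← Sproj_eq] at h
  refine h.congr_fun fun j => ?_
  by_cases hj : j ≤ k - 2
  · simp only [if_pos hj, Dproj_eq]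
  · simp only [if_neg hj]
    have : (fun ξ : EuclideanSpace ℝ (Fin n) => (((0:ℝ) : ℂ)) * 𝓕 ⇑f ξ) = fun _ => 0 := by
      funext ξ; simp
    rw [this]
    simp [Real.fourierInv_eq]

end core

section pointwise

variable {n : ℕ} {χ : EuclideanSpace ℝ (Fin n) → ℝ}

variable (hχ : IsLPCutoff χ)
include hχ

lemma summable_norm_Dproj (hn : 1 ≤ n) (f : 𝓢(EuclideanSpace ℝ (Fin n), ℂ))
    (x : EuclideanSpace ℝ (Fin n)) :
    Summable (fun j => ‖Dproj χ j ⇑f x‖) :=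
  Summable.of_nonneg_of_le (fun j => norm_nonneg _) (fun j => norm_Dproj_le hχ f j x)
    (summable_dnorm hχ hn f)

lemma summable_prod_DD (hn : 1 ≤ n) (f g : 𝓢(EuclideanSpace ℝ (Fin n), ℂ))
    (x : EuclideanSpace ℝ (Fin n)) :
    Summable (fun p : ℤ × ℤ => Dproj χ p.1 ⇑f x * Dproj χ p.2 ⇑g x) :=
  summable_mul_of_summable_norm (f := fun j : ℤ => Dproj χ j ⇑f x)
    (g := fun j : ℤ => Dproj χ j ⇑g x)
    (summable_norm_Dproj hχ hn f x) (summable_norm_Dproj hχ hn g x)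

lemma summable_prod_DD_norm (hn : 1 ≤ n) (f g : 𝓢(EuclideanSpace ℝ (Fin n), ℂ))
    (x : EuclideanSpace ℝ (Fin n)) :
    Summable (fun p : ℤ × ℤ => ‖Dproj χ p.1 ⇑f x * Dproj χ p.2 ⇑g x‖) := by
  have h := (summable_norm_Dproj hχ hn f x).mul_of_nonneg (summable_norm_Dproj hχ hn g x)
    (fun j => norm_nonneg _) (fun j => norm_nonneg _)
  refine h.congr fun p => ?_
  rw [norm_mul]

lemma hasSum_prod_DD (hn : 1 ≤ n) (f g : 𝓢(EuclideanSpace ℝ (Fin n), ℂ))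
    (x : EuclideanSpace ℝ (Fin n)) :
    HasSum (fun p : ℤ × ℤ => Dproj χ p.1 ⇑f x * Dproj χ p.2 ⇑g x) (f x * g x) :=
  HasSum.mul (f := fun j : ℤ => Dproj χ j ⇑f x) (g := fun j : ℤ => Dproj χ j ⇑g x)
    (hasSum_Dproj hχ hn f x) (hasSum_Dproj hχ hn g x) (summable_prod_DD hχ hn f g x)

lemma summable_ite_DD (hn : 1 ≤ n) (f g : 𝓢(EuclideanSpace ℝ (Fin n), ℂ))
    (x : EuclideanSpace ℝ (Fin n)) (P : ℤ × ℤ → Prop) [DecidablePred P] :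
    Summable (fun p : ℤ × ℤ => if P p then Dproj χ p.1 ⇑f x * Dproj χ p.2 ⇑g x else 0) := by
  refine Summable.of_norm_bounded (summable_prod_DD_norm hχ hn f g x) fun p => ?_
  by_cases hp : P p
  · rw [if_pos hp]
  · rw [if_neg hp, norm_zero]; positivity

lemma summable_SD_g (hn : 1 ≤ n) (f g : 𝓢(EuclideanSpace ℝ (Fin n), ℂ))
    (x : EuclideanSpace ℝ (Fin n)) :
    Summable (fun j : ℤ => Sproj χ (j - 1) ⇑g x * Dproj χ j ⇑f x) := by
  refine Summable.of_norm_bounded ((summable_dnorm hχ hn f).mul_left (fInt g)) fun j => ?_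
  rw [norm_mul]
  have h1 := norm_Sproj_le hχ g (j-1) x
  have h2 := norm_Dproj_le hχ f j x
  exact mul_le_mul h1 h2 (norm_nonneg _) (fInt_nonneg g)

lemma tsum_T1 (hn : 1 ≤ n) (f g : 𝓢(EuclideanSpace ℝ (Fin n), ℂ))
    (x : EuclideanSpace ℝ (Fin n)) :
    (∑' p : ℤ × ℤ, if p.2 ≤ p.1 - 2 then Dproj χ p.1 ⇑f x * Dproj χ p.2 ⇑g x else 0)
      = ∑' j : ℤ, Sproj χ (j - 1) ⇑g x * Dproj χ j ⇑f x := by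
  rw [Summable.tsum_prod (summable_ite_DD hχ hn f g x (fun p => p.2 ≤ p.1 - 2))]
  apply tsum_congr
  intro i
  have h1 : (fun j => if j ≤ i - 2 then Dproj χ i ⇑f x * Dproj χ j ⇑g x else 0)
      = fun j => Dproj χ i ⇑f x * (if j ≤ i - 2 then Dproj χ j ⇑g x else 0) := by
    funext j
    by_cases hj : j ≤ i - 2 <;> simp [hj]
  calc (∑' j : ℤ, if j ≤ i - 2 then Dproj χ i ⇑f x * Dproj χ j ⇑g x else 0)
      = ∑' j : ℤ, Dproj χ i ⇑f x * (if j ≤ i - 2 then Dproj χ j ⇑g x else 0) := by rw [h1]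
    _ = Dproj χ i ⇑f x * ∑' j : ℤ, (if j ≤ i - 2 then Dproj χ j ⇑g x else 0) := tsum_mul_left
    _ = Dproj χ i ⇑f x * Sproj χ (i - 1) ⇑g x := by
        rw [(hasSum_Dproj_restrict hχ hn i g x).tsum_eq]
    _ = Sproj χ (i - 1) ⇑g x * Dproj χ i ⇑f x := mul_comm _ _

lemma tsum_T2 (hn : 1 ≤ n) (f g : 𝓢(EuclideanSpace ℝ (Fin n), ℂ))
    (x : EuclideanSpace ℝ (Fin n)) :
    (∑' p : ℤ × ℤ, if p.1 ≤ p.2 - 2 then Dproj χ p.1 ⇑f x * Dproj χ p.2 ⇑g x else 0)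
      = ∑' j : ℤ, Sproj χ (j - 1) ⇑f x * Dproj χ j ⇑g x := by
  have hswap : (∑' p : ℤ × ℤ, if p.1 ≤ p.2 - 2 then Dproj χ p.1 ⇑f x * Dproj χ p.2 ⇑g x else 0)
      = ∑' q : ℤ × ℤ, if q.2 ≤ q.1 - 2 then Dproj χ q.2 ⇑f x * Dproj χ q.1 ⇑g x else 0 := by
    rw [← (Equiv.prodComm ℤ ℤ).tsum_eq
      (fun p : ℤ × ℤ => if p.1 ≤ p.2 - 2 then Dproj χ p.1 ⇑f x * Dproj χ p.2 ⇑g x else 0)]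
    rfl
  rw [hswap]
  have hs : Summable (fun q : ℤ × ℤ =>
      if q.2 ≤ q.1 - 2 then Dproj χ q.2 ⇑f x * Dproj χ q.1 ⇑g x else 0) := by
    refine Summable.of_norm_bounded (summable_prod_DD_norm hχ hn g f x) fun p => ?_
    by_cases hp : p.2 ≤ p.1 - 2
    · rw [if_pos hp, norm_mul, norm_mul, mul_comm]
    · rw [if_neg hp, norm_zero]; positivity
  rw [Summable.tsum_prod hs]
  apply tsum_congr
  intro j
  have h1 : (fun i => if i ≤ j - 2 then Dproj χ i ⇑f x * Dproj χ j ⇑g x else 0)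
      = fun i => (if i ≤ j - 2 then Dproj χ i ⇑f x else 0) * Dproj χ j ⇑g x := by
    funext i
    by_cases hi : i ≤ j - 2 <;> simp [hi]
  calc (∑' i : ℤ, if i ≤ j - 2 then Dproj χ i ⇑f x * Dproj χ j ⇑g x else 0)
      = ∑' i : ℤ, (if i ≤ j - 2 then Dproj χ i ⇑f x else 0) * Dproj χ j ⇑g x := by rw [h1]
    _ = (∑' i : ℤ, (if i ≤ j - 2 then Dproj χ i ⇑f x else 0)) * Dproj χ j ⇑g x := tsum_mul_right
    _ = Sproj χ (j - 1) ⇑f x * Dproj χ j ⇑g x := by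
        rw [(hasSum_Dproj_restrict hχ hn j f x).tsum_eq]

lemma pointwise_bony (hn : 1 ≤ n) (f g : 𝓢(EuclideanSpace ℝ (Fin n), ℂ))
    (x : EuclideanSpace ℝ (Fin n)) :
    f x * g x =
      (∑' j : ℤ, Sproj χ (j - 1) ⇑g x * Dproj χ j ⇑f x)
      + (∑' j : ℤ, Sproj χ (j - 1) ⇑f x * Dproj χ j ⇑g x)
      + ∑' p : ℤ × ℤ, (if |p.1 - p.2| ≤ 1 then Dproj χ p.1 ⇑f x * Dproj χ p.2 ⇑g x else 0) := by
  classical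
  have hsplit : ∀ p : ℤ × ℤ, Dproj χ p.1 ⇑f x * Dproj χ p.2 ⇑g x
      = (if p.2 ≤ p.1 - 2 then Dproj χ p.1 ⇑f x * Dproj χ p.2 ⇑g x else 0)
      + (if p.1 ≤ p.2 - 2 then Dproj χ p.1 ⇑f x * Dproj χ p.2 ⇑g x else 0)
      + (if |p.1 - p.2| ≤ 1 then Dproj χ p.1 ⇑f x * Dproj χ p.2 ⇑g x else 0) := by
    intro p
    rcases p with ⟨a, b⟩
    have habs : (|a - b| ≤ 1) ↔ (-1 ≤ a - b ∧ a - b ≤ 1) := abs_le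
    simp only
    split_ifs with h1 h2 h3 h2 h3 h3 <;>
      first
      | (exfalso; rw [habs] at *; omega)
      | ring
  have h1 := (hasSum_prod_DD hχ hn f g x).tsum_eq
  have e1 : (∑' p : ℤ × ℤ, Dproj χ p.1 ⇑f x * Dproj χ p.2 ⇑g x)
      = (∑' p : ℤ × ℤ, if p.2 ≤ p.1 - 2 then Dproj χ p.1 ⇑f x * Dproj χ p.2 ⇑g x else 0)
      + (∑' p : ℤ × ℤ, if p.1 ≤ p.2 - 2 then Dproj χ p.1 ⇑f x * Dproj χ p.2 ⇑g x else 0)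
      + (∑' p : ℤ × ℤ, if |p.1 - p.2| ≤ 1 then Dproj χ p.1 ⇑f x * Dproj χ p.2 ⇑g x else 0) := by
    rw [← Summable.tsum_add (summable_ite_DD hχ hn f g x _) (summable_ite_DD hχ hn f g x _),
      ← Summable.tsum_add ((summable_ite_DD hχ hn f g x _).add (summable_ite_DD hχ hn f g x _))
        (summable_ite_DD hχ hn f g x _)]
    exact tsum_congr hsplit
  rw [← h1, e1, tsum_T1 hχ hn f g x, tsum_T2 hχ hn f g x]

end pointwise

section integralhelpers

variable {n : ℕ}

lemma integrable_mul_test {u : EuclideanSpace ℝ (Fin n) → ℂ} (hu : Continuous u) {C : ℝ}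
    (hC : ∀ x, ‖u x‖ ≤ C) (h : 𝓢(EuclideanSpace ℝ (Fin n), ℂ)) :
    Integrable (fun x => u x * h x) :=
  h.integrable.bdd_mul hu.aestronglyMeasurable (Eventually.of_forall hC)

lemma norm_integral_mul_test_le (h : 𝓢(EuclideanSpace ℝ (Fin n), ℂ))
    {u : EuclideanSpace ℝ (Fin n) → ℂ} (hu : Continuous u) {C : ℝ}
    (hC0 : 0 ≤ C) (hC : ∀ x, ‖u x‖ ≤ C) :
    ‖∫ x, u x * h x‖ ≤ C * ∫ x, ‖h x‖ := by
  refine (norm_integral_le_integral_norm _).trans ?_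
  rw [← integral_const_mul]
  refine integral_mono (integrable_mul_test hu hC h).norm (h.integrable.norm.const_mul C)
    fun x => ?_
  rw [norm_mul]
  exact mul_le_mul_of_nonneg_right (hC x) (norm_nonneg _)

lemma tsum_norm_bound {ι : Type*} [Countable ι] (T : ι → EuclideanSpace ℝ (Fin n) → ℂ)
    (c : ι → ℝ) (hcs : Summable c) (hTb : ∀ i x, ‖T i x‖ ≤ c i)
    (x : EuclideanSpace ℝ (Fin n)) : ‖∑' i, T i x‖ ≤ ∑' i, c i := by
  have hsn : Summable (fun i => ‖T i x‖) :=
    Summable.of_nonneg_of_le (fun i => norm_nonneg _) (fun i => hTb i x) hcs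
  exact (norm_tsum_le_tsum_norm hsn).trans (Summable.tsum_le_tsum (fun i => hTb i x) hsn hcs)

lemma integral_tsum_mul_test {ι : Type*} [Countable ι] (h : 𝓢(EuclideanSpace ℝ (Fin n), ℂ))
    (T : ι → EuclideanSpace ℝ (Fin n) → ℂ) (hTcont : ∀ i, Continuous (T i))
    (c : ι → ℝ) (hc0 : ∀ i, 0 ≤ c i) (hcs : Summable c)
    (hTb : ∀ i x, ‖T i x‖ ≤ c i) :
    ∫ x, (∑' i, T i x) * h x = ∑' i, ∫ x, T i x * h x := by
  have hpt : ∀ x, (∑' i, T i x) * h x = ∑' i, T i x * h x :=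
    fun x => (tsum_mul_right).symm
  rw [integral_congr_ae (Eventually.of_forall hpt)]
  refine integral_tsum (fun i => ((hTcont i).mul h.continuous).aestronglyMeasurable) ?_
  have hHl : ∫⁻ x, (‖h x‖₊ : ℝ≥0∞) ≠ ∞ := h.integrable.2.ne
  have hbnd : ∀ i, ∫⁻ x, (‖T i x * h x‖₊ : ℝ≥0∞) ≤ ENNReal.ofReal (c i) * ∫⁻ x, ‖h x‖₊ := by
    intro i
    rw [← lintegral_const_mul' _ _ ENNReal.ofReal_ne_top]
    apply lintegral_mono
    intro x
    show (‖T i x * h x‖₊ : ℝ≥0∞) ≤ ENNReal.ofReal (c i) * ‖h x‖₊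
    rw [← enorm_eq_nnnorm, ← enorm_eq_nnnorm, ← ofReal_norm, ← ofReal_norm, norm_mul,
      ← ENNReal.ofReal_mul (hc0 i)]
    exact ENNReal.ofReal_le_ofReal
      (mul_le_mul_of_nonneg_right (hTb i x) (norm_nonneg _))
  refine ne_top_of_le_ne_top ?_ (ENNReal.tsum_le_tsum hbnd)
  rw [ENNReal.tsum_mul_right]
  apply ENNReal.mul_ne_top _ hHl
  rw [← ENNReal.ofReal_tsum_of_nonneg hc0 hcs]
  exact ENNReal.ofReal_ne_top

lemma summable_integral_mul_test {ι : Type*} [Countable ι]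
    (h : 𝓢(EuclideanSpace ℝ (Fin n), ℂ))
    (T : ι → EuclideanSpace ℝ (Fin n) → ℂ) (hTcont : ∀ i, Continuous (T i))
    (c : ι → ℝ) (hc0 : ∀ i, 0 ≤ c i) (hcs : Summable c)
    (hTb : ∀ i x, ‖T i x‖ ≤ c i) :
    Summable (fun i => ∫ x, T i x * h x) := by
  refine Summable.of_norm_bounded (hcs.mul_right (∫ x, ‖h x‖)) fun i => ?_
  exact norm_integral_mul_test_le h (hTcont i) (hc0 i) (hTb i)

end integralhelpers

section final

variable {n : ℕ} {χ : EuclideanSpace ℝ (Fin n) → ℝ}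

variable (hχ : IsLPCutoff χ)
include hχ

lemma T1_bound (f g : 𝓢(EuclideanSpace ℝ (Fin n), ℂ)) (j : ℤ)
    (x : EuclideanSpace ℝ (Fin n)) :
    ‖Sproj χ (j - 1) ⇑g x * Dproj χ j ⇑f x‖ ≤ fInt g * dnorm χ f j := by
  rw [norm_mul]
  exact mul_le_mul (norm_Sproj_le hχ g (j-1) x) (norm_Dproj_le hχ f j x) (norm_nonneg _)
    (fInt_nonneg g)

lemma T1_cont (f g : 𝓢(EuclideanSpace ℝ (Fin n), ℂ)) (j : ℤ) :
    Continuous (fun x => Sproj χ (j - 1) ⇑g x * Dproj χ j ⇑f x) :=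
  (continuous_Sproj hχ g (j-1)).mul (continuous_Dproj hχ f j)

lemma c1_summable (hn : 1 ≤ n) (f g : 𝓢(EuclideanSpace ℝ (Fin n), ℂ)) :
    Summable (fun j => fInt g * dnorm χ f j) :=
  (summable_dnorm hχ hn f).mul_left (fInt g)

lemma c1_nonneg (f g : 𝓢(EuclideanSpace ℝ (Fin n), ℂ)) (j : ℤ) :
    0 ≤ fInt g * dnorm χ f j :=
  mul_nonneg (fInt_nonneg g) (dnorm_nonneg f j)

lemma T3_bound (f g : 𝓢(EuclideanSpace ℝ (Fin n), ℂ)) (p : ℤ × ℤ)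
    (x : EuclideanSpace ℝ (Fin n)) :
    ‖(if |p.1 - p.2| ≤ 1 then Dproj χ p.1 ⇑f x * Dproj χ p.2 ⇑g x else 0)‖
      ≤ dnorm χ f p.1 * dnorm χ g p.2 := by
  by_cases hp : |p.1 - p.2| ≤ 1
  · rw [if_pos hp, norm_mul]
    exact mul_le_mul (norm_Dproj_le hχ f p.1 x) (norm_Dproj_le hχ g p.2 x) (norm_nonneg _)
      (dnorm_nonneg f p.1)
  · rw [if_neg hp, norm_zero]
    exact mul_nonneg (dnorm_nonneg f p.1) (dnorm_nonneg g p.2)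

lemma T3_cont (f g : 𝓢(EuclideanSpace ℝ (Fin n), ℂ)) (p : ℤ × ℤ) :
    Continuous (fun x =>
      if |p.1 - p.2| ≤ 1 then Dproj χ p.1 ⇑f x * Dproj χ p.2 ⇑g x else 0) := by
  by_cases hp : |p.1 - p.2| ≤ 1
  · simp only [if_pos hp]
    exact (continuous_Dproj hχ f p.1).mul (continuous_Dproj hχ g p.2)
  · simp only [if_neg hp]
    exact continuous_const

lemma c3_summable (hn : 1 ≤ n) (f g : 𝓢(EuclideanSpace ℝ (Fin n), ℂ)) :
    Summable (fun p : ℤ × ℤ => dnorm χ f p.1 * dnorm χ g p.2) :=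
  (summable_dnorm hχ hn f).mul_of_nonneg (summable_dnorm hχ hn g)
    (fun j => dnorm_nonneg f j) (fun j => dnorm_nonneg g j)

lemma c3_nonneg (f g : 𝓢(EuclideanSpace ℝ (Fin n), ℂ)) (p : ℤ × ℤ) :
    0 ≤ dnorm χ f p.1 * dnorm χ g p.2 :=
  mul_nonneg (dnorm_nonneg f p.1) (dnorm_nonneg g p.2)

end final

end BonyAux

open BonyAux in
theorem bony_paraproduct_formula'
    (n : ℕ) (hn : 1 ≤ n) (χ : EuclideanSpace ℝ (Fin n) → ℝ) (hχ : IsLPCutoff χ)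
    (f g : 𝓢(EuclideanSpace ℝ (Fin n), ℂ)) :
    (∀ x, Summable fun j : ℤ => Sproj χ (j - 1) (⇑g) x * Dproj χ j (⇑f) x) ∧
    (∀ x, Summable fun j : ℤ => Sproj χ (j - 1) (⇑f) x * Dproj χ j (⇑g) x) ∧
    (∀ x, Summable fun ij : ℤ × ℤ =>
      if |ij.1 - ij.2| ≤ 1 then Dproj χ ij.1 (⇑f) x * Dproj χ ij.2 (⇑g) x else 0) ∧
    (∀ h : 𝓢(EuclideanSpace ℝ (Fin n), ℂ),
      Summable fun j : ℤ => ∫ x, Sproj χ (j - 1) (⇑g) x * Dproj χ j (⇑f) x * h x) ∧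
    (∀ h : 𝓢(EuclideanSpace ℝ (Fin n), ℂ),
      Summable fun j : ℤ => ∫ x, Sproj χ (j - 1) (⇑f) x * Dproj χ j (⇑g) x * h x) ∧
    (∀ h : 𝓢(EuclideanSpace ℝ (Fin n), ℂ),
      Summable fun ij : ℤ × ℤ =>
        ∫ x, (if |ij.1 - ij.2| ≤ 1 then Dproj χ ij.1 (⇑f) x * Dproj χ ij.2 (⇑g) x else 0) * h x) ∧
    (∀ h : 𝓢(EuclideanSpace ℝ (Fin n), ℂ),
      ∫ x, f x * g x * h x =
        (∑' j : ℤ, ∫ x, Sproj χ (j - 1) (⇑g) x * Dproj χ j (⇑f) x * h x)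
        + (∑' j : ℤ, ∫ x, Sproj χ (j - 1) (⇑f) x * Dproj χ j (⇑g) x * h x)
        + ∑' ij : ℤ × ℤ,
            ∫ x, (if |ij.1 - ij.2| ≤ 1 then Dproj χ ij.1 (⇑f) x * Dproj χ ij.2 (⇑g) x else 0)
              * h x) := by
  refine ⟨fun x => summable_SD_g hχ hn f g x, fun x => summable_SD_g hχ hn g f x,
    fun x => summable_ite_DD hχ hn f g x _, ?_, ?_, ?_, ?_⟩
  · intro h
    exact summable_integral_mul_test h _ (T1_cont hχ f g) _ (c1_nonneg hχ f g)
      (c1_summable hχ hn f g) (T1_bound hχ f g)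
  · intro h
    exact summable_integral_mul_test h _ (T1_cont hχ g f) _ (c1_nonneg hχ g f)
      (c1_summable hχ hn g f) (T1_bound hχ g f)
  · intro h
    exact summable_integral_mul_test h _ (T3_cont hχ f g) _ (c3_nonneg hχ f g)
      (c3_summable hχ hn f g) (T3_bound hχ f g)
  · intro h
    have key1 := integral_tsum_mul_test h _ (T1_cont hχ f g) _ (c1_nonneg hχ f g)
      (c1_summable hχ hn f g) (T1_bound hχ f g)
    have key2 := integral_tsum_mul_test h _ (T1_cont hχ g f) _ (c1_nonneg hχ g f)
      (c1_summable hχ hn g f) (T1_bound hχ g f)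
    have key3 := integral_tsum_mul_test h _ (T3_cont hχ f g) _ (c3_nonneg hχ f g)
      (c3_summable hχ hn f g) (T3_bound hχ f g)
    have hAc : Continuous (fun x => ∑' j : ℤ, Sproj χ (j - 1) (⇑g) x * Dproj χ j (⇑f) x) :=
      continuous_tsum (T1_cont hχ f g) (c1_summable hχ hn f g) (T1_bound hχ f g)
    have hBc : Continuous (fun x => ∑' j : ℤ, Sproj χ (j - 1) (⇑f) x * Dproj χ j (⇑g) x) :=
      continuous_tsum (T1_cont hχ g f) (c1_summable hχ hn g f) (T1_bound hχ g f)
    have hCc : Continuous (fun x => ∑' p : ℤ × ℤ,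
        if |p.1 - p.2| ≤ 1 then Dproj χ p.1 ⇑f x * Dproj χ p.2 ⇑g x else 0) :=
      continuous_tsum (T3_cont hχ f g) (c3_summable hχ hn f g) (T3_bound hχ f g)
    have hintA : Integrable (fun x =>
        (∑' j : ℤ, Sproj χ (j - 1) (⇑g) x * Dproj χ j (⇑f) x) * h x) :=
      integrable_mul_test hAc
        (tsum_norm_bound _ _ (c1_summable hχ hn f g) (T1_bound hχ f g)) h
    have hintB : Integrable (fun x =>
        (∑' j : ℤ, Sproj χ (j - 1) (⇑f) x * Dproj χ j (⇑g) x) * h x) :=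
      integrable_mul_test hBc
        (tsum_norm_bound _ _ (c1_summable hχ hn g f) (T1_bound hχ g f)) h
    have hintC : Integrable (fun x => (∑' p : ℤ × ℤ,
        if |p.1 - p.2| ≤ 1 then Dproj χ p.1 ⇑f x * Dproj χ p.2 ⇑g x else 0) * h x) :=
      integrable_mul_test hCc
        (tsum_norm_bound _ _ (c3_summable hχ hn f g) (T3_bound hχ f g)) h
    have hpt : ∀ x, f x * g x * h x =
        (∑' j : ℤ, Sproj χ (j - 1) (⇑g) x * Dproj χ j (⇑f) x) * h x
        + ((∑' j : ℤ, Sproj χ (j - 1) (⇑f) x * Dproj χ j (⇑g) x) * h x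
        + (∑' p : ℤ × ℤ,
            if |p.1 - p.2| ≤ 1 then Dproj χ p.1 ⇑f x * Dproj χ p.2 ⇑g x else 0) * h x) := by
      intro x
      rw [pointwise_bony hχ hn f g x]
      ring
    calc ∫ x, f x * g x * h x
        = ∫ x, ((∑' j : ℤ, Sproj χ (j - 1) (⇑g) x * Dproj χ j (⇑f) x) * h x
          + ((∑' j : ℤ, Sproj χ (j - 1) (⇑f) x * Dproj χ j (⇑g) x) * h x
          + (∑' p : ℤ × ℤ,
              if |p.1 - p.2| ≤ 1 then Dproj χ p.1 ⇑f x * Dproj χ p.2 ⇑g x else 0) * h x)) :=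
          integral_congr_ae (Eventually.of_forall hpt)
      _ = (∫ x, (∑' j : ℤ, Sproj χ (j - 1) (⇑g) x * Dproj χ j (⇑f) x) * h x)
          + ((∫ x, (∑' j : ℤ, Sproj χ (j - 1) (⇑f) x * Dproj χ j (⇑g) x) * h x)
          + (∫ x, (∑' p : ℤ × ℤ,
              if |p.1 - p.2| ≤ 1 then Dproj χ p.1 ⇑f x * Dproj χ p.2 ⇑g x else 0) * h x)) := by
          have hintBC : Integrable (fun x =>
              (∑' j : ℤ, Sproj χ (j - 1) (⇑f) x * Dproj χ j (⇑g) x) * h x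
              + (∑' p : ℤ × ℤ,
                if |p.1 - p.2| ≤ 1 then Dproj χ p.1 ⇑f x * Dproj χ p.2 ⇑g x else 0) * h x) :=
            hintB.add hintC
          rw [integral_add hintA hintBC, integral_add hintB hintC]
      _ = (∑' j : ℤ, ∫ x, Sproj χ (j - 1) (⇑g) x * Dproj χ j (⇑f) x * h x)
          + (∑' j : ℤ, ∫ x, Sproj χ (j - 1) (⇑f) x * Dproj χ j (⇑g) x * h x)
          + ∑' ij : ℤ × ℤ,
              ∫ x, (if |ij.1 - ij.2| ≤ 1 then Dproj χ ij.1 (⇑f) x * Dproj χ ij.2 (⇑g) x else 0)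
                * h x := by
          rw [key1, key2, key3]
          ring



/-- **Bony's para-product formula**: for Schwartz `f, g` the three series
`T_g f = Σ_j (S_{j-1} g)(Δ_j f)`, `T_f g = Σ_j (S_{j-1} f)(Δ_j g)` and
`R(f,g) = Σ_{|i-j|≤1} (Δ_i f)(Δ_j g)` converge in the space of tempered distributions
(pointwise, and when paired against any Schwartz test function), and
`f·g = T_g f + T_f g + R(f,g)` as tempered distributions. -/
theorem bony_paraproduct_formula
    (n : ℕ) (hn : 1 ≤ n) (χ : EuclideanSpace ℝ (Fin n) → ℝ) (hχ : IsLPCutoff χ)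
    (f g : 𝓢(EuclideanSpace ℝ (Fin n), ℂ)) :
    (∀ x, Summable fun j : ℤ => Sproj χ (j - 1) (⇑g) x * Dproj χ j (⇑f) x) ∧
    (∀ x, Summable fun j : ℤ => Sproj χ (j - 1) (⇑f) x * Dproj χ j (⇑g) x) ∧
    (∀ x, Summable fun ij : ℤ × ℤ =>
      if |ij.1 - ij.2| ≤ 1 then Dproj χ ij.1 (⇑f) x * Dproj χ ij.2 (⇑g) x else 0) ∧
    (∀ h : 𝓢(EuclideanSpace ℝ (Fin n), ℂ),
      Summable fun j : ℤ => ∫ x, Sproj χ (j - 1) (⇑g) x * Dproj χ j (⇑f) x * h x) ∧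
    (∀ h : 𝓢(EuclideanSpace ℝ (Fin n), ℂ),
      Summable fun j : ℤ => ∫ x, Sproj χ (j - 1) (⇑f) x * Dproj χ j (⇑g) x * h x) ∧
    (∀ h : 𝓢(EuclideanSpace ℝ (Fin n), ℂ),
      Summable fun ij : ℤ × ℤ =>
        ∫ x, (if |ij.1 - ij.2| ≤ 1 then Dproj χ ij.1 (⇑f) x * Dproj χ ij.2 (⇑g) x else 0) * h x) ∧
    (∀ h : 𝓢(EuclideanSpace ℝ (Fin n), ℂ),
      ∫ x, f x * g x * h x =
        (∑' j : ℤ, ∫ x, Sproj χ (j - 1) (⇑g) x * Dproj χ j (⇑f) x * h x)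
        + (∑' j : ℤ, ∫ x, Sproj χ (j - 1) (⇑f) x * Dproj χ j (⇑g) x * h x)
        + ∑' ij : ℤ × ℤ,
            ∫ x, (if |ij.1 - ij.2| ≤ 1 then Dproj χ ij.1 (⇑f) x * Dproj χ ij.2 (⇑g) x else 0)
              * h x) := by
  exact bony_paraproduct_formula' n hn χ hχ f g
end
end
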